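/- Let α > 0 and M > 0. There exists a constant C = C(M) > 0 such that the following holds: if X = {(λ, m_λ)}_{λ∈Λ} is an interpolating divisor for F^∞_α with interpolation constant M_X ≤ M, then the discs D(λ, √(m_λ/α) − C), taken over those λ ∈ Λ with m_λ > αC², are pairwise disjoint. -/

import Mathlib

/-! If `x` lay in the discs of both `λ` and `μ`, interpolate the normalized kernel `k_x` at `λ`
and `0` at `μ` by some `f` of norm at most `M`. A function of norm `N` vanishing to order `n` at
`p` has weighted size at most `N e^{-α(√(n/α) - |x - p|)²/2}` at `x`: factor out `(z - p)^n`,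
divide by `k_p` (which recentres the weight at `p`) and apply the maximum principle on the circle
`|z - p| = √(n/α)`. With `e^{-αC²/2} = 1/(2M + 2)` this bounds the weighted sizes of `f` and of
`f - k_x` at `x` by `M/(2M + 2)` and `1/2`, while that of `k_x` is `1`. -/

open MeasureTheory Metric Set
open scoped ENNReal NNReal

noncomputable section

/-- Membership in the Fock space `F^∞_α`: entire functions with
`sup_z |f(z)| e^{−(α/2)|z|²} < ∞`. -/
def MemFInf (α : ℝ) (f : ℂ → ℂ) : Prop :=
  Differentiable ℂ f ∧
    ∃ C : ℝ, ∀ z : ℂ, ‖f z‖ * Real.exp (-(α / 2) * ‖z‖ ^ 2) ≤ C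

/-- The norm in `F^∞_α`. -/
def FInfNorm (α : ℝ) (f : ℂ → ℂ) : ℝ :=
  ⨆ z : ℂ, ‖f z‖ * Real.exp (-(α / 2) * ‖z‖ ^ 2)

/-- Membership in `N^∞_{λ,n}`: the functions of `F^∞_α` vanishing at `λ` to order `n`. -/
def MemNInf (α : ℝ) (lam : ℂ) (n : ℕ) (f : ℂ → ℂ) : Prop :=
  MemFInf α f ∧ ∀ k < n, iteratedDeriv k f lam = 0

/-- The quotient norm `‖f‖_{F^∞_α / N^∞_{λ,n}} = inf {‖f − g‖ : g ∈ N^∞_{λ,n}}`. -/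
def quotInf (α : ℝ) (lam : ℂ) (n : ℕ) (f : ℂ → ℂ) : ℝ :=
  sInf {c : ℝ | ∃ g : ℂ → ℂ, MemNInf α lam n g ∧ FInfNorm α (fun z => f z - g z) = c}

/-- `X = (Λ, m)` is a sampling divisor for `F^∞_α`. -/
def SamplingFInf (α : ℝ) (Λ : Set ℂ) (m : ℂ → ℕ) : Prop :=
  ∃ L : ℝ, 0 < L ∧ ∀ f : ℂ → ℂ, MemFInf α f →
    FInfNorm α f ≤ L * ⨆ lam : Λ, quotInf α (lam : ℂ) (m (lam : ℂ)) f

/-- `X = (Λ, m)` is an interpolating divisor for `F^∞_α`: for every family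
`(f_λ)` with uniformly bounded quotient norms there is `f ∈ F^∞_α` with
`f − f_λ ∈ N^∞_λ` for all `λ ∈ Λ`. -/
def InterpolatingFInf (α : ℝ) (Λ : Set ℂ) (m : ℂ → ℕ) : Prop :=
  ∀ F : ℂ → ℂ → ℂ, (∀ lam ∈ Λ, MemFInf α (F lam)) →
    (∃ B : ℝ, ∀ lam ∈ Λ, quotInf α lam (m lam) (F lam) ≤ B) →
    ∃ f : ℂ → ℂ, MemFInf α f ∧
      ∀ lam ∈ Λ, MemNInf α lam (m lam) (fun z => f z - F lam z)

/-- `X = (Λ, m)` is an interpolating divisor for `F^∞_α` with interpolation constant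
at most `M`: for every family `(f_λ)` with quotient norms bounded by `B` there is an
interpolating `f ∈ F^∞_α` with `‖f‖ ≤ M B`. -/
def InterpolatingFInfConst (α M : ℝ) (Λ : Set ℂ) (m : ℂ → ℕ) : Prop :=
  ∀ F : ℂ → ℂ → ℂ, (∀ lam ∈ Λ, MemFInf α (F lam)) →
    ∀ B : ℝ, (∀ lam ∈ Λ, quotInf α lam (m lam) (F lam) ≤ B) →
    ∃ f : ℂ → ℂ, MemFInf α f ∧
      (∀ lam ∈ Λ, MemNInf α lam (m lam) (fun z => f z - F lam z)) ∧
      FInfNorm α f ≤ M * B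

open Complex in
/-- Normalized reproducing kernel of `F^∞_α` at `p`. -/
def fockKernel (α : ℝ) (p z : ℂ) : ℂ :=
  cexp (α * (starRingEnd ℂ) p * z - (α * ‖p‖ ^ 2 / 2 : ℝ))

lemma differentiable_fockKernel (α : ℝ) (p : ℂ) : Differentiable ℂ (fockKernel α p) :=
  ((differentiable_id.const_mul _).sub_const _).cexp

lemma norm_fockKernel (α : ℝ) (p z : ℂ) :
    ‖fockKernel α p z‖ = Real.exp (α / 2 * ‖z‖ ^ 2 - α / 2 * ‖z - p‖ ^ 2) := by
  rw [fockKernel, Complex.norm_exp]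
  congr 1
  simp only [Complex.sub_re, Complex.mul_re, Complex.mul_im, Complex.ofReal_re,
    Complex.ofReal_im, Complex.conj_re, Complex.conj_im, Complex.sub_im,
    Complex.sq_norm, Complex.normSq_apply]
  ring

lemma norm_fockKernel_mul_exp (α : ℝ) (p z : ℂ) :
    ‖fockKernel α p z‖ * Real.exp (-(α / 2) * ‖z‖ ^ 2) = Real.exp (-(α / 2) * ‖z - p‖ ^ 2) := by
  rw [norm_fockKernel, ← Real.exp_add]
  ring_nf

lemma norm_div_fockKernel_mul_exp (α : ℝ) (p z a : ℂ) :
    ‖a / fockKernel α p z‖ * Real.exp (-(α / 2) * ‖z - p‖ ^ 2) =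
      ‖a‖ * Real.exp (-(α / 2) * ‖z‖ ^ 2) := by
  rw [norm_div, norm_fockKernel, div_mul_eq_mul_div, div_eq_iff (Real.exp_pos _).ne', mul_assoc,
    ← Real.exp_add]
  ring_nf

lemma Differentiable.exists_eq_pow_mul_of_iteratedDeriv_eq_zero {f : ℂ → ℂ}
    (hf : Differentiable ℂ f) {a : ℂ} {n : ℕ} (hv : ∀ k < n, iteratedDeriv k f a = 0) :
    ∃ g : ℂ → ℂ, Differentiable ℂ g ∧ ∀ z, f z = (z - a) ^ n * g z := by
  obtain ⟨g, hg, hfg⟩ := (natCast_le_analyticOrderAt (hf.analyticAt a)).mp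
    ((natCast_le_analyticOrderAt_iff_iteratedDeriv_eq_zero (hf.analyticAt a)).mpr hv)
  set G := Function.update (fun z => f z / (z - a) ^ n) a (g a)
  have hGg : G =ᶠ[nhds a] g := by
    filter_upwards [hfg] with z hz
    rcases eq_or_ne z a with rfl | hza
    · simp [G]
    · simp [G, hza, hz, sub_ne_zero.mpr hza]
  refine ⟨G, fun z => ?_, fun z => ?_⟩
  · rcases eq_or_ne z a with rfl | hza
    · exact hg.differentiableAt.congr_of_eventuallyEq hGg
    · have hG : G =ᶠ[nhds z] fun w => f w / (w - a) ^ n := by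
        filter_upwards [eventually_ne_nhds hza] with w hw
        simp [G, hw]
      have hpow : DifferentiableAt ℂ (fun w => (w - a) ^ n) z := by fun_prop
      exact ((hf z).div hpow (pow_ne_zero n (sub_ne_zero.mpr hza))).congr_of_eventuallyEq hG
  · rcases eq_or_ne z a with rfl | hza
    · simpa [G] using hfg.self_of_nhds
    · simp [G, hza, mul_div_cancel₀ _ (pow_ne_zero n (sub_ne_zero.mpr hza))]

lemma pow_mul_exp_le {α s u : ℝ} {n : ℕ} (hα : 0 < α) (hs : 0 < s) (hu : 0 ≤ u)
    (hn : (n : ℝ) = α * s ^ 2) :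
    u ^ n * Real.exp (-(α / 2) * u ^ 2) ≤
      s ^ n * Real.exp (-(α / 2) * s ^ 2) * Real.exp (-(α / 2) * (s - u) ^ 2) := by
  rcases hu.eq_or_lt with rfl | hu
  · have hn0 : n ≠ 0 := (Nat.cast_pos.mp (hn ▸ by positivity : (0 : ℝ) < n)).ne'
    simp only [zero_pow hn0, zero_mul]
    positivity
  have hlog : (n : ℝ) * (Real.log u - Real.log s) ≤ α * s * u - α * s ^ 2 := by
    calc (n : ℝ) * (Real.log u - Real.log s) ≤ n * (u / s - 1) := by
          rw [← Real.log_div hu.ne' hs.ne']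
          exact mul_le_mul_of_nonneg_left (Real.log_le_sub_one_of_pos (by positivity)) n.cast_nonneg
      _ = α * s * u - α * s ^ 2 := by rw [hn]; field_simp
  rw [← Real.exp_log (pow_pos hu n), ← Real.exp_log (pow_pos hs n), ← Real.exp_add,
    ← Real.exp_add, ← Real.exp_add, Real.exp_le_exp, Real.log_pow, Real.log_pow]
  linarith

lemma norm_mul_exp_le_of_iteratedDeriv_eq_zero {α N : ℝ} (hα : 0 < α) {F : ℂ → ℂ}
    (hF : Differentiable ℂ F) (hFN : ∀ z, ‖F z‖ * Real.exp (-(α / 2) * ‖z‖ ^ 2) ≤ N)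
    {p : ℂ} {n : ℕ} (hn : 0 < n) (hv : ∀ k < n, iteratedDeriv k F p = 0)
    {x : ℂ} (hx : ‖x - p‖ ≤ Real.sqrt (n / α)) :
    ‖F x‖ * Real.exp (-(α / 2) * ‖x‖ ^ 2) ≤
      N * Real.exp (-(α / 2) * (Real.sqrt (n / α) - ‖x - p‖) ^ 2) := by
  set s := Real.sqrt (n / α)
  have hs : 0 < s := Real.sqrt_pos.mpr (by positivity)
  have hns : (n : ℝ) = α * s ^ 2 := by
    rw [Real.sq_sqrt (by positivity)]
    field_simp
  obtain ⟨g, hg, hFg⟩ := hF.exists_eq_pow_mul_of_iteratedDeriv_eq_zero hv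
  set G := fun z => g z / fockKernel α p z
  have hweight : ∀ z, ‖F z‖ * Real.exp (-(α / 2) * ‖z‖ ^ 2) =
      ‖z - p‖ ^ n * (‖G z‖ * Real.exp (-(α / 2) * ‖z - p‖ ^ 2)) := fun z => by
    rw [norm_div_fockKernel_mul_exp, hFg, norm_mul, norm_pow, mul_assoc]
  have hG : Differentiable ℂ G := fun z =>
    (hg z).div (differentiable_fockKernel α p z) (Complex.exp_ne_zero _)
  set K := N / (s ^ n * Real.exp (-(α / 2) * s ^ 2))
  have hGx : ‖G x‖ ≤ K := by
    refine Complex.norm_le_of_forall_mem_frontier_norm_le isBounded_ball hG.diffContOnCl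
      (fun z hz => ?_) (by rwa [closure_ball p hs.ne', mem_closedBall, Complex.dist_eq])
    rw [frontier_ball p hs.ne', mem_sphere_iff_norm] at hz
    rw [le_div_iff₀ (by positivity), ← mul_assoc, mul_comm _ (s ^ n), mul_assoc, ← hz,
      ← hweight]
    exact hFN z
  calc ‖F x‖ * Real.exp (-(α / 2) * ‖x‖ ^ 2)
      = ‖G x‖ * (‖x - p‖ ^ n * Real.exp (-(α / 2) * ‖x - p‖ ^ 2)) := by rw [hweight]; ring
    _ ≤ K * (s ^ n * Real.exp (-(α / 2) * s ^ 2) * Real.exp (-(α / 2) * (s - ‖x - p‖) ^ 2)) :=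
        mul_le_mul hGx (pow_mul_exp_le hα hs (norm_nonneg _) hns) (by positivity)
          ((norm_nonneg _).trans hGx)
    _ = N * Real.exp (-(α / 2) * (s - ‖x - p‖) ^ 2) := by
        simp only [K]
        field_simp

lemma norm_mul_exp_le_of_mem_ball {α N C : ℝ} (hα : 0 < α) {F : ℂ → ℂ}
    (hF : Differentiable ℂ F) (hFN : ∀ z, ‖F z‖ * Real.exp (-(α / 2) * ‖z‖ ^ 2) ≤ N)
    {p : ℂ} {n : ℕ} (hn : 0 < n) (hv : ∀ k < n, iteratedDeriv k F p = 0) (hC : 0 ≤ C)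
    {x : ℂ} (hx : x ∈ ball p (Real.sqrt (n / α) - C)) :
    ‖F x‖ * Real.exp (-(α / 2) * ‖x‖ ^ 2) ≤ N * Real.exp (-(α / 2) * C ^ 2) := by
  rw [mem_ball, Complex.dist_eq] at hx
  have hN : 0 ≤ N := (by positivity : (0 : ℝ) ≤ ‖F x‖ * _).trans (hFN x)
  refine (norm_mul_exp_le_of_iteratedDeriv_eq_zero hα hF hFN hn hv (by linarith)).trans
    (mul_le_mul_of_nonneg_left (Real.exp_le_exp.mpr ?_) hN)
  have : C ^ 2 ≤ (Real.sqrt (n / α) - ‖x - p‖) ^ 2 := pow_le_pow_left₀ hC (by linarith) 2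
  nlinarith

lemma memFInf_zero (α : ℝ) : MemFInf α (fun _ => 0) :=
  ⟨differentiable_const 0, 0, fun z => by simp⟩

lemma memNInf_zero (α : ℝ) (lam : ℂ) (n : ℕ) : MemNInf α lam n (fun _ => 0) :=
  ⟨memFInf_zero α, fun _ _ => iteratedDeriv_const_zero⟩

lemma FInfNorm_nonneg (α : ℝ) (f : ℂ → ℂ) : 0 ≤ FInfNorm α f :=
  Real.iSup_nonneg fun z => by positivity

lemma FInfNorm_le {α c : ℝ} {f : ℂ → ℂ} (hc : 0 ≤ c)
    (h : ∀ z, ‖f z‖ * Real.exp (-(α / 2) * ‖z‖ ^ 2) ≤ c) : FInfNorm α f ≤ c :=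
  Real.iSup_le h hc

lemma MemFInf.le_FInfNorm {α : ℝ} {f : ℂ → ℂ} (hf : MemFInf α f) (z : ℂ) :
    ‖f z‖ * Real.exp (-(α / 2) * ‖z‖ ^ 2) ≤ FInfNorm α f := by
  obtain ⟨c, hc⟩ := hf.2
  exact le_ciSup ⟨c, by rintro _ ⟨w, rfl⟩; exact hc w⟩ z

lemma quotInf_le_FInfNorm (α : ℝ) (lam : ℂ) (n : ℕ) (f : ℂ → ℂ) :
    quotInf α lam n f ≤ FInfNorm α f :=
  csInf_le ⟨0, by rintro _ ⟨g, -, rfl⟩; exact FInfNorm_nonneg α _⟩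
    ⟨fun _ => 0, memNInf_zero α lam n, by simp only [sub_zero]⟩

lemma norm_fockKernel_mul_exp_le_one {α : ℝ} (hα : 0 ≤ α) (p z : ℂ) :
    ‖fockKernel α p z‖ * Real.exp (-(α / 2) * ‖z‖ ^ 2) ≤ 1 := by
  rw [norm_fockKernel_mul_exp, Real.exp_le_one_iff]
  nlinarith [sq_nonneg ‖z - p‖]

lemma memFInf_fockKernel {α : ℝ} (hα : 0 ≤ α) (p : ℂ) : MemFInf α (fockKernel α p) :=
  ⟨differentiable_fockKernel α p, 1, norm_fockKernel_mul_exp_le_one hα p⟩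

lemma FInfNorm_fockKernel_le_one {α : ℝ} (hα : 0 ≤ α) (p : ℂ) :
    FInfNorm α (fockKernel α p) ≤ 1 :=
  FInfNorm_le zero_le_one (norm_fockKernel_mul_exp_le_one hα p)

lemma MemFInf.norm_sub_mul_exp_le {α : ℝ} {f g : ℂ → ℂ} (hf : MemFInf α f) (hg : MemFInf α g)
    (z : ℂ) :
    ‖f z - g z‖ * Real.exp (-(α / 2) * ‖z‖ ^ 2) ≤ FInfNorm α f + FInfNorm α g := by
  calc ‖f z - g z‖ * Real.exp (-(α / 2) * ‖z‖ ^ 2)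
      ≤ (‖f z‖ + ‖g z‖) * Real.exp (-(α / 2) * ‖z‖ ^ 2) := by gcongr; exact norm_sub_le _ _
    _ ≤ FInfNorm α f + FInfNorm α g := by
        rw [add_mul]; exact add_le_add (hf.le_FInfNorm z) (hg.le_FInfNorm z)

lemma InterpolatingFInfConst.exists_single {α M : ℝ} {Λ : Set ℂ} {m : ℂ → ℕ}
    (hI : InterpolatingFInfConst α M Λ m) {lam : ℂ} (hlam : lam ∈ Λ) {h : ℂ → ℂ}
    (hh : MemFInf α h) :
    ∃ f : ℂ → ℂ, MemFInf α f ∧ FInfNorm α f ≤ M * FInfNorm α h ∧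
      MemNInf α lam (m lam) (fun z => f z - h z) ∧
      ∀ mu ∈ Λ, mu ≠ lam → MemNInf α mu (m mu) f := by
  classical
  obtain ⟨f, hf, hfN, hfM⟩ := hI (fun ν => if ν = lam then h else fun _ => 0)
    (fun ν _ => by split_ifs; exacts [hh, memFInf_zero α]) (FInfNorm α h) fun ν _ => by
      refine (quotInf_le_FInfNorm α ν _ _).trans ?_
      split_ifs
      · exact le_rfl
      · exact FInfNorm_le (FInfNorm_nonneg α h) fun z => by simpa using FInfNorm_nonneg α h
  refine ⟨f, hf, hfM, by simpa using hfN lam hlam, fun mu hmu hne => ?_⟩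
  simpa [hne] using hfN mu hmu

/-- If `X` is an interpolating divisor for `F^∞_α` with interpolation constant at most
`M`, then for some `C = C(M) > 0` the discs `D(λ, √(m_λ/α) − C)`, over those `λ ∈ Λ`
with `m_λ > αC²`, are pairwise disjoint. -/
theorem stmt8 (α M : ℝ) (hα : 0 < α) (hM : 0 < M) :
    ∃ C : ℝ, 0 < C ∧ ∀ (Λ : Set ℂ) (m : ℂ → ℕ),
      Λ.Countable → (∀ lam ∈ Λ, 1 ≤ m lam) →
      InterpolatingFInfConst α M Λ m →
      ({l ∈ Λ | α * C ^ 2 < (m l : ℝ)}).PairwiseDisjoint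
        (fun lam => ball lam (Real.sqrt ((m lam : ℝ) / α) - C)) := by
  set C := Real.sqrt (2 * Real.log (2 * M + 2) / α)
  have hlog : 0 < Real.log (2 * M + 2) := Real.log_pos (by linarith)
  have hC : 0 < C := Real.sqrt_pos.mpr (by positivity)
  have hexpC : Real.exp (-(α / 2) * C ^ 2) = (2 * M + 2)⁻¹ := by
    rw [Real.sq_sqrt (by positivity), show -(α / 2) * (2 * Real.log (2 * M + 2) / α) =
      -Real.log (2 * M + 2) by field_simp, Real.exp_neg, Real.exp_log (by linarith)]
  refine ⟨C, hC, fun Λ m _ hm hI lam hlam mu hmu hne => Set.disjoint_left.mpr fun x hxl hxm => ?_⟩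
  obtain ⟨f, hf, hfM, hflam, hfmu⟩ := hI.exists_single hlam.1 (memFInf_fockKernel hα.le x)
  have hfM' : FInfNorm α f ≤ M :=
    hfM.trans (mul_le_of_le_one_right hM.le (FInfNorm_fockKernel_le_one hα.le x))
  have hsmall := norm_mul_exp_le_of_mem_ball hα hf.1 (fun z => (hf.le_FInfNorm z).trans hfM')
    (hm mu hmu.1) (hfmu mu hmu.1 hne.symm).2 hC.le hxm
  have hclose := norm_mul_exp_le_of_mem_ball hα hflam.1.1
    (fun z => (hf.norm_sub_mul_exp_le (memFInf_fockKernel hα.le x) z).trans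
      (add_le_add hfM' (FInfNorm_fockKernel_le_one hα.le x))) (hm lam hlam.1) hflam.2 hC.le hxl
  rw [hexpC] at hsmall hclose
  refine lt_irrefl (1 : ℝ) ?_
  calc (1 : ℝ) = ‖fockKernel α x x‖ * Real.exp (-(α / 2) * ‖x‖ ^ 2) := by
        rw [norm_fockKernel_mul_exp, sub_self, norm_zero]; simp
    _ ≤ (‖f x‖ + ‖f x - fockKernel α x x‖) * Real.exp (-(α / 2) * ‖x‖ ^ 2) := by
        gcongr; exact norm_le_norm_add_norm_sub _ _
    _ ≤ (M + (M + 1)) * (2 * M + 2)⁻¹ := by rw [add_mul, add_mul]; exact add_le_add hsmall hclose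
    _ < 1 := by rw [← div_eq_mul_inv, div_lt_one (by linarith)]; linarith

end
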